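/- arXiv:1710.09769 — 4 statements merged into one kernel-verified Lean document; each statement's English description precedes it below -/
import Mathlib

section
/- Let p be a prime, let s ≥ 1 and g ≥ 1 be integers, and for each i ∈ {1,…,g} let a_i, d_i ∈ ℤ_p^× be p-adic units, let b_i, c_i ∈ ℤ_p, and let n_i, x_i, y_i be nonnegative integers with y_i ≤ n_i. Consider the polynomial P = ∏_{i=1}^g (p^s·c_i·X_i + d_i)^{n_i − y_i} (p·a_i·X_i + b_i)^{y_i} ∈ ℤ_p[X_1,…,X_g], and let A be the coefficient of X_1^{x_1}⋯X_g^{x_g} in P. If x_i > n_i for some i, then A = 0. Otherwise, the p-adic valuation of A is at least (x_1 + ⋯ + x_g) + (s−1)·Σ_{i=1}^g max(0, x_i − y_i). -/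
/-!
Each factor of the product involves a single variable `X i`, so the coefficient of `X^x` is the
product over `i` of the coefficients of `X^(x i)` in the univariate factors. Such a factor has
degree `≤ n i`, and expanding both binomials, its coefficient of `X^k` is a sum of terms
divisible by `p^(s k₁ + k₂)` with `k₁ + k₂ = k` and `k₂ ≤ y i`; since `k₁ ≥ k - y i`, this
exponent is at least `k + (s - 1) (k - y i)`.
-/

open MvPolynomial

theorem PadicInt.norm_le_pow_iff_dvd {p : ℕ} [Fact p.Prime] (x : ℤ_[p]) (n : ℕ) :
    ‖x‖ ≤ (p : ℝ) ^ (-n : ℤ) ↔ (p : ℤ_[p]) ^ n ∣ x := by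
  rw [PadicInt.norm_le_pow_iff_mem_span_pow, Ideal.mem_span_singleton]

namespace Polynomial

variable {R : Type*} [CommSemiring R]

theorem coeff_C_mul_X_add_C_pow (u v : R) (e k : ℕ) :
    ((C u * X + C v) ^ e).coeff k = u ^ k * v ^ (e - k) * e.choose k := by
  have hterm : ∀ j, (C u * X) ^ j * C v ^ (e - j) * (e.choose j : R[X]) =
      C (u ^ j * v ^ (e - j) * e.choose j) * X ^ j := fun j => by
    simp only [C_mul, C_pow, map_natCast]
    ring
  simp only [add_pow, hterm, finsetSum_coeff, coeff_C_mul_X_pow, Finset.sum_ite_eq]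
  split_ifs with hk
  · rfl
  · rw [Nat.choose_eq_zero_of_lt (by simpa [Nat.lt_succ_iff] using hk), Nat.cast_zero, mul_zero]

theorem natDegree_linear_pow_mul_linear_pow_le (u v u' v' : R) (e₁ e₂ : ℕ) :
    ((C u * X + C v) ^ e₁ * (C u' * X + C v') ^ e₂).natDegree ≤ e₁ + e₂ := by
  compute_degree

theorem pow_dvd_coeff_linear_pow_mul_linear_pow (π c d a b : R) {s : ℕ} (hs : 1 ≤ s)
    (e₁ e₂ k : ℕ) :
    π ^ (k + (s - 1) * (k - e₂)) ∣
      ((C (π ^ s * c) * X + C d) ^ e₁ * (C (π * a) * X + C b) ^ e₂).coeff k := by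
  rw [coeff_mul]
  refine Finset.dvd_sum fun ⟨k₁, k₂⟩ hk => ?_
  rw [Finset.HasAntidiagonal.mem_antidiagonal] at hk
  simp only [coeff_C_mul_X_add_C_pow]
  rcases lt_or_ge e₂ k₂ with h | h
  · simp [Nat.choose_eq_zero_of_lt h]
  have hexp : k + (s - 1) * (k - e₂) ≤ s * k₁ + k₂ := by
    have hmono : (s - 1) * (k - e₂) ≤ (s - 1) * k₁ := Nat.mul_le_mul_left _ (by omega)
    have hsplit : (s - 1) * k₁ + k₁ = s * k₁ := by
      rw [← Nat.succ_mul, Nat.succ_eq_add_one, Nat.sub_add_cancel hs]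
    omega
  refine (pow_dvd_pow π hexp).trans (Dvd.intro (c ^ k₁ * d ^ (e₁ - k₁) * e₁.choose k₁ *
    (a ^ k₂ * b ^ (e₂ - k₂) * e₂.choose k₂)) ?_)
  ring

end Polynomial

namespace MvPolynomial

theorem coeff_prod_aeval_X {R σ : Type*} [CommSemiring R] [Fintype σ] [DecidableEq σ]
    (q : σ → Polynomial R) (m : σ →₀ ℕ) :
    coeff m (∏ i, Polynomial.aeval (X i : MvPolynomial σ R) (q i)) = ∏ i, (q i).coeff (m i) := by
  have hsum : ∀ i, Polynomial.aeval (X i : MvPolynomial σ R) (q i) =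
      ∑ k ∈ (q i).support, monomial (Finsupp.single i k) ((q i).coeff k) := by
    intro i
    simp [Polynomial.aeval_def, Polynomial.eval₂_eq_sum, Polynomial.sum_def,
      C_mul_X_pow_eq_monomial]
  simp only [hsum, Finset.prod_univ_sum, ← monomial_sum_prod,
    ← Finsupp.equivFunOnFinite_symm_eq_sum, coeff_sum, coeff_monomial, Equiv.symm_apply_eq,
    Finset.sum_ite_eq']
  split_ifs with hm
  · rfl
  · obtain ⟨i, hi⟩ : ∃ i, m i ∉ (q i).support := by simpa [Fintype.mem_piFinset] using hm
    exact (Finset.prod_eq_zero (Finset.mem_univ i) (Polynomial.notMem_support_iff.mp hi)).symm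

end MvPolynomial

theorem stmt4_general (p : ℕ) [Fact p.Prime] (s g : ℕ) (hs : 1 ≤ s)
    (a b c d : Fin g → ℤ_[p])
    (n x y : Fin g → ℕ) (hyn : ∀ i, y i ≤ n i) (A : ℤ_[p])
    (hA : A = MvPolynomial.coeff (Finsupp.equivFunOnFinite.symm x)
      (∏ i : Fin g,
        (MvPolynomial.C ((p : ℤ_[p]) ^ s * c i) * MvPolynomial.X i
            + MvPolynomial.C (d i)) ^ (n i - y i) *
          (MvPolynomial.C ((p : ℤ_[p]) * a i) * MvPolynomial.X i
            + MvPolynomial.C (b i)) ^ y i)) :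
    ((∃ i, n i < x i) → A = 0) ∧
    ((∀ i, x i ≤ n i) →
      ‖A‖ ≤ (p : ℝ) ^ (-(((∑ i, x i) + (s - 1) * ∑ i, (x i - y i) : ℕ) : ℤ))) := by
  let q : Fin g → Polynomial ℤ_[p] := fun i =>
    (Polynomial.C ((p : ℤ_[p]) ^ s * c i) * Polynomial.X + Polynomial.C (d i)) ^ (n i - y i) *
      (Polynomial.C ((p : ℤ_[p]) * a i) * Polynomial.X + Polynomial.C (b i)) ^ y i
  have hAq : A = ∏ i, (q i).coeff (x i) := by
    rw [hA]
    convert coeff_prod_aeval_X q (Finsupp.equivFunOnFinite.symm x) using 1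
    · simp [q, MvPolynomial.algebraMap_eq]
    · rfl
  refine ⟨fun ⟨i, hi⟩ => hAq ▸ Finset.prod_eq_zero (Finset.mem_univ i) ?_, fun _ => ?_⟩
  · have hdeg : (q i).natDegree ≤ n i - y i + y i :=
      Polynomial.natDegree_linear_pow_mul_linear_pow_le _ _ _ _ _ _
    exact Polynomial.coeff_eq_zero_of_natDegree_lt (by have := hyn i; omega)
  · rw [PadicInt.norm_le_pow_iff_dvd, hAq, Finset.mul_sum, ← Finset.sum_add_distrib,
      ← Finset.prod_pow_eq_pow_sum]
    exact Finset.prod_dvd_prod_of_dvd _ _ fun i _ =>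
      Polynomial.pow_dvd_coeff_linear_pow_mul_linear_pow _ _ _ _ _ hs _ _ _

/-- Let `p` be a prime, `s ≥ 1`, `g ≥ 1`, and for each `i` let `a_i, d_i ∈ ℤ_p^×` be units,
`b_i, c_i ∈ ℤ_p`, and `n_i, x_i, y_i` nonnegative integers with `y_i ≤ n_i`. Let `A` be the
coefficient of `X_1^{x_1}⋯X_g^{x_g}` in
`∏_i (p^s·c_i·X_i + d_i)^(n_i − y_i) (p·a_i·X_i + b_i)^(y_i)`.
If `x_i > n_i` for some `i` then `A = 0`; otherwise the p-adic valuation of `A` is at least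
`(x_1 + ⋯ + x_g) + (s−1)·Σ_i max(0, x_i − y_i)` (expressed via the p-adic norm). -/
theorem stmt4 (p : ℕ) [Fact p.Prime] (s g : ℕ) (hs : 1 ≤ s) (hg : 1 ≤ g)
    (a b c d : Fin g → ℤ_[p]) (ha : ∀ i, IsUnit (a i)) (hd : ∀ i, IsUnit (d i))
    (n x y : Fin g → ℕ) (hyn : ∀ i, y i ≤ n i) (A : ℤ_[p])
    (hA : A = MvPolynomial.coeff (Finsupp.equivFunOnFinite.symm x)
      (∏ i : Fin g,
        (MvPolynomial.C ((p : ℤ_[p]) ^ s * c i) * MvPolynomial.X i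
            + MvPolynomial.C (d i)) ^ (n i - y i) *
          (MvPolynomial.C ((p : ℤ_[p]) * a i) * MvPolynomial.X i
            + MvPolynomial.C (b i)) ^ y i)) :
    ((∃ i, n i < x i) → A = 0) ∧
    ((∀ i, x i ≤ n i) →
      ‖A‖ ≤ (p : ℝ) ^ (-(((∑ i, x i) + (s - 1) * ∑ i, (x i - y i) : ℕ) : ℤ))) :=
  stmt4_general p s g hs a b c d n x y hyn A hA
end

section
/- Let p be a prime, let N ≥ 1 be an integer, let A be an N×N matrix with entries in ℚ_p, and let f : {1,…,N} → ℝ_{≥0} be a function such that ‖A_{ij}‖_p ≤ p^{−f(i)} for all i, j. For 0 ≤ n ≤ N, let c_n ∈ ℚ_p be the coefficient of T^n in the reverse characteristic polynomial det(1 − T·A) ∈ ℚ_p[T], and let S_n denote the minimum of Σ_{i ∈ I} f(i) over all n-element subsets I of {1,…,N} (equivalently, the sum of the n smallest values of f counted with multiplicity). Then ‖c_n‖_p ≤ p^{−S_n} for every 0 ≤ n ≤ N. -/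
/-!
By the Leibniz formula each term of `det (1 - T • A)` is, up to sign, a product of the linear
polynomials `δ - A (σ i) i • T`. The `T^n` coefficient of such a product is a sum of products
containing `n` entries of `A` from distinct rows and otherwise entries of norm `≤ 1`, so by the
ultrametric inequality its norm is at most `∏_{i ∈ I} p^(-f i) ≤ p^(-S_n)` for some set `I`
of `n` rows.
-/

open Finset Polynomial

section LinearFactors

variable {ι R : Type*} [DecidableEq ι]

theorem coeff_prod_C_add_X_mul_C [CommSemiring R] (s : Finset ι) (a b : ι → R) (n : ℕ) :
    (∏ i ∈ s, (C (a i) + X * C (b i))).coeff n =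
      ∑ t ∈ s.powersetCard n, (∏ i ∈ t, b i) * ∏ i ∈ s \ t, a i := by
  have hterm : ∀ t : Finset ι, (∏ i ∈ t, (X * C (b i))) * ∏ i ∈ s \ t, C (a i) =
      X ^ t.card * C ((∏ i ∈ t, b i) * ∏ i ∈ s \ t, a i) := by
    intro t
    rw [prod_mul_distrib, prod_const, map_mul, map_prod, map_prod, mul_assoc]
  simp_rw [add_comm (C _), prod_add, hterm, finsetSum_coeff, coeff_X_pow_mul', coeff_C]
  rw [powersetCard_eq_filter, sum_filter]
  refine sum_congr rfl fun t _ => ?_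
  split_ifs <;> first | rfl | omega

theorem norm_coeff_prod_C_add_X_mul_C_le [NormedField R] [IsUltrametricDist R]
    (s : Finset ι) (a b : ι → R) (w : ι → ℝ) (n : ℕ) {B : ℝ} (hB : 0 ≤ B)
    (ha : ∀ i ∈ s, ‖a i‖ ≤ 1) (hb : ∀ i ∈ s, ‖b i‖ ≤ w i)
    (hw : ∀ t ⊆ s, t.card = n → ∏ i ∈ t, w i ≤ B) :
    ‖(∏ i ∈ s, (C (a i) + X * C (b i))).coeff n‖ ≤ B := by
  rw [coeff_prod_C_add_X_mul_C]
  refine IsUltrametricDist.norm_sum_le_of_forall_le_of_nonneg hB fun t ht => ?_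
  obtain ⟨hts, htn⟩ := mem_powersetCard.mp ht
  calc ‖(∏ i ∈ t, b i) * ∏ i ∈ s \ t, a i‖
      = (∏ i ∈ t, ‖b i‖) * ∏ i ∈ s \ t, ‖a i‖ := by rw [norm_mul, norm_prod, norm_prod]
    _ ≤ ∏ i ∈ t, ‖b i‖ := mul_le_of_le_one_right (prod_nonneg fun _ _ => norm_nonneg _)
        (prod_le_one (fun _ _ => norm_nonneg _) fun i hi => ha i (sdiff_subset hi))
    _ ≤ ∏ i ∈ t, w i := prod_le_prod (fun _ _ => norm_nonneg _) fun i hi => hb i (hts hi)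
    _ ≤ B := hw t hts htn

end LinearFactors

theorem Matrix.norm_coeff_det_one_sub_X_smul_le {ι K : Type*} [Fintype ι] [DecidableEq ι]
    [NormedField K] [IsUltrametricDist K] (A : Matrix ι ι K) (w : ι → ℝ) (n : ℕ) {B : ℝ}
    (hB : 0 ≤ B) (hA : ∀ i j, ‖A i j‖ ≤ w i)
    (hw : ∀ I : Finset ι, I.card = n → ∏ i ∈ I, w i ≤ B) :
    ‖(det ((1 : Matrix ι ι K[X]) - (X : K[X]) • A.map C)).coeff n‖ ≤ B := by
  have hentry : ∀ i j, ((1 : Matrix ι ι K[X]) - (X : K[X]) • A.map C) i j =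
      C ((1 : Matrix ι ι K) i j) + X * C (-A i j) := by
    intro i j
    simp [one_apply, apply_ite C, sub_eq_add_neg]
  rw [det_apply, finsetSum_coeff]
  refine IsUltrametricDist.norm_sum_le_of_forall_le_of_nonneg hB fun σ _ => ?_
  rw [Units.smul_def, zsmul_eq_mul, ← C_eq_intCast, coeff_C_mul, norm_mul]
  refine (mul_le_of_le_one_left (norm_nonneg _) ?_).trans ?_
  · rcases Int.units_eq_one_or (Equiv.Perm.sign σ) with h | h <;> simp [h]
  · simp_rw [hentry]
    refine norm_coeff_prod_C_add_X_mul_C_le _ _ _ (fun i => w (σ i)) n hB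
      (fun i _ => ?_) (fun i _ => (norm_neg (A _ i)).trans_le (hA _ i)) fun t _ ht => ?_
    · by_cases h : σ i = i <;> simp [one_apply, h]
    · exact (prod_map t σ.toEmbedding w).symm.trans_le (hw _ (by rw [card_map, ht]))

theorem stmt9_general (p : ℕ) [Fact p.Prime] (N : ℕ)
    (A : Matrix (Fin N) (Fin N) ℚ_[p]) (f : Fin N → ℝ)
    (hA : ∀ i j, ‖A i j‖ ≤ (p : ℝ) ^ (-f i)) :
    ∀ n ≤ N,
      ‖(Matrix.det ((1 : Matrix (Fin N) (Fin N) (Polynomial ℚ_[p])) -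
            (Polynomial.X : Polynomial ℚ_[p]) • A.map (Polynomial.C : ℚ_[p] →+* Polynomial ℚ_[p]))).coeff n‖ ≤
        (p : ℝ) ^ (-sInf {x : ℝ | ∃ I : Finset (Fin N), I.card = n ∧ x = ∑ i ∈ I, f i}) := by
  intro n _
  have hp : (0 : ℝ) < p := by exact_mod_cast (Fact.out : p.Prime).pos
  have hp1 : (1 : ℝ) ≤ p := by exact_mod_cast (Fact.out : p.Prime).one_lt.le
  have hbdd : BddBelow {x : ℝ | ∃ I : Finset (Fin N), I.card = n ∧ x = ∑ i ∈ I, f i} := by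
    refine ((Set.finite_range fun I : Finset (Fin N) => ∑ i ∈ I, f i).subset ?_).bddBelow
    rintro _ ⟨I, -, rfl⟩
    exact ⟨I, rfl⟩
  refine A.norm_coeff_det_one_sub_X_smul_le _ n (Real.rpow_nonneg hp.le _) hA fun I hI => ?_
  rw [← Real.rpow_sum_of_pos hp, sum_neg_distrib]
  exact Real.rpow_le_rpow_of_exponent_le hp1 (neg_le_neg (csInf_le hbdd ⟨I, hI, rfl⟩))

/-- Let `p` be prime, `N ≥ 1`, `A` an `N×N` matrix over `ℚ_p`, and `f : {1,…,N} → ℝ_{≥0}`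
with `‖A_{ij}‖_p ≤ p^{−f(i)}` for all `i, j`. For `0 ≤ n ≤ N`, the coefficient `c_n` of `T^n`
in `det(1 − T·A)` satisfies `‖c_n‖_p ≤ p^{−S_n}`, where `S_n` is the minimum of
`Σ_{i ∈ I} f(i)` over all `n`-element subsets `I` of `{1,…,N}`. -/
theorem stmt9 (p : ℕ) [Fact p.Prime] (N : ℕ) (hN : 1 ≤ N)
    (A : Matrix (Fin N) (Fin N) ℚ_[p]) (f : Fin N → ℝ) (hf : ∀ i, 0 ≤ f i)
    (hA : ∀ i j, ‖A i j‖ ≤ (p : ℝ) ^ (-f i)) :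
    ∀ n ≤ N,
      ‖(Matrix.det ((1 : Matrix (Fin N) (Fin N) (Polynomial ℚ_[p])) -
            (Polynomial.X : Polynomial ℚ_[p]) • A.map (Polynomial.C : ℚ_[p] →+* Polynomial ℚ_[p]))).coeff n‖ ≤
        (p : ℝ) ^ (-sInf {x : ℝ | ∃ I : Finset (Fin N), I.card = n ∧ x = ∑ i ∈ I, f i}) :=
  stmt9_general p N A f hA
end

section
/- Let p be a prime and let h ≥ 1, M ≥ 1 be integers. Define b : ℤ_{≥0} → ℤ_{≥0} by b(m) = ⌊(√(8m+1) − 1)/2⌋, i.e., b(m) is the unique nonnegative integer t with t(t+1)/2 ≤ m < (t+1)(t+2)/2. Let A be an (hM)×(hM) matrix with entries in ℚ_p, with rows and columns indexed by {0, 1, …, hM−1}, such that ‖A_{ij}‖_p ≤ p^{−b(⌊i/h⌋)} for all i, j. Then for every integer i ≥ 1 with i(i+1)h/2 ≤ hM, the coefficient of T^{i(i+1)h/2} in det(1 − T·A) ∈ ℚ_p[T] has p-adic norm at most p^{−(i−1)i(i+1)h/3}. -/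
/-!
Expanding `det (1 - T • A)` over permutations, and then each product of linear factors over
subsets, writes the coefficient of `T ^ k` as a sum of terms, each a product of `k` entries of `A`
from `k` distinct rows. By the ultrametric inequality its norm is at most the largest product of
`k` distinct row bounds `p ^ (-b ⌊r / h⌋)`, and since `b` is monotone the first `k` rows give the
largest one. For `k = h i (i + 1) / 2` these rows are the blocks on which `b ⌊r / h⌋ = t`, of
`h (t + 1)` rows each, for `t < i`; so the exponent is
`h ∑_{t < i} t (t + 1) = h (i - 1) i (i + 1) / 3`.
-/

open Finset Polynomial

theorem Polynomial.norm_coeff_prod_X_mul_C_add_C_le {R ι : Type*} [NormedCommRing R]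
    [NormOneClass R] [IsUltrametricDist R] (s : Finset ι) (a b : ι → R) {w : ι → ℝ}
    (ha : ∀ j ∈ s, ‖a j‖ ≤ 1) (hb : ∀ j ∈ s, ‖b j‖ ≤ w j) (k : ℕ) {B : ℝ} (hB0 : 0 ≤ B)
    (hB : ∀ t ⊆ s, t.card = k → ∏ j ∈ t, w j ≤ B) :
    ‖(∏ j ∈ s, (X * C (b j) + C (a j))).coeff k‖ ≤ B := by
  classical
  have hexpand : ∏ j ∈ s, (X * C (b j) + C (a j)) =
      ∑ t ∈ s.powerset, C ((∏ j ∈ t, b j) * ∏ j ∈ s \ t, a j) * X ^ t.card := by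
    rw [prod_add]
    refine sum_congr rfl fun t _ => ?_
    simp only [prod_mul_distrib, prod_const, map_mul, map_prod]
    ring
  rw [hexpand, finsetSum_coeff]
  refine IsUltrametricDist.norm_sum_le_of_forall_le_of_nonneg hB0 fun t ht => ?_
  rw [coeff_C_mul_X_pow]
  split_ifs with hk
  · have hts : t ⊆ s := mem_powerset.1 ht
    calc ‖(∏ j ∈ t, b j) * ∏ j ∈ s \ t, a j‖
        ≤ (∏ j ∈ t, ‖b j‖) * ∏ j ∈ s \ t, ‖a j‖ :=
          (norm_mul_le _ _).trans (mul_le_mul (norm_prod_le _ _) (norm_prod_le _ _)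
            (norm_nonneg _) (prod_nonneg fun _ _ => norm_nonneg _))
      _ ≤ (∏ j ∈ t, w j) * 1 :=
          mul_le_mul (prod_le_prod (fun _ _ => norm_nonneg _) fun j hj => hb j (hts hj))
            (prod_le_one (fun _ _ => norm_nonneg _) fun j hj => ha j (sdiff_subset hj))
            (prod_nonneg fun _ _ => norm_nonneg _)
            (prod_nonneg fun j hj => (norm_nonneg _).trans (hb j (hts hj)))
      _ ≤ B := by rw [mul_one]; exact hB t hts hk.symm
  · rwa [norm_zero]

theorem Matrix.norm_coeff_charpolyRev_le {R n : Type*} [NormedCommRing R] [NormOneClass R]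
    [IsUltrametricDist R] [Fintype n] [DecidableEq n] (A : Matrix n n R) {w : n → ℝ}
    (hA : ∀ i j, ‖A i j‖ ≤ w i) (k : ℕ) {B : ℝ} (hB0 : 0 ≤ B)
    (hB : ∀ s : Finset n, s.card = k → ∏ i ∈ s, w i ≤ B) :
    ‖A.charpolyRev.coeff k‖ ≤ B := by
  have hentry : ∀ i j,
      (1 - (X : R[X]) • A.map C) i j = X * C (-A i j) + C ((1 : Matrix n n R) i j) := by
    intro i j
    simp only [Matrix.sub_apply, Matrix.smul_apply, Matrix.map_apply, Matrix.one_apply,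
      smul_eq_mul, map_neg]
    split_ifs <;> simp [sub_eq_neg_add]
  rw [charpolyRev, ← Matrix.det_transpose, Matrix.det_apply, finsetSum_coeff]
  refine IsUltrametricDist.norm_sum_le_of_forall_le_of_nonneg hB0 fun σ _ => ?_
  simp only [coeff_smul, norm_units_zsmul, Matrix.transpose_apply, hentry]
  refine norm_coeff_prod_X_mul_C_add_C_le _ _ _ (fun i _ => ?_) (fun i _ => ?_) k hB0
    fun s _ hs => hB s hs
  · rw [Matrix.one_apply]
    split_ifs <;> simp
  · rw [norm_neg]
    exact hA i (σ i)

theorem Monotone.sum_range_card_le_sum {M : Type*} [AddCommMonoid M] [PartialOrder M]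
    [IsOrderedAddMonoid M] {f : ℕ → M} (hf : Monotone f) (s : Finset ℕ) :
    ∑ i ∈ range s.card, f i ≤ ∑ i ∈ s, f i := by
  induction s using Finset.induction_on_max with
  | empty => simp
  | insert a s hlt ih =>
    have has : a ∉ s := fun h => lt_irrefl a (hlt a h)
    have hcard : s.card ≤ a := by
      simpa using card_le_card fun x hx => mem_range.2 (hlt x hx)
    rw [card_insert_of_notMem has, sum_range_succ, sum_insert has, add_comm]
    exact add_le_add (hf hcard) ih

theorem Finset.sum_range_mul_div {M : Type*} [AddCommMonoid M] (f : ℕ → M) (h n : ℕ) :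
    ∑ r ∈ range (h * n), f (r / h) = h • ∑ q ∈ range n, f q := by
  induction n with
  | zero => simp
  | succ n ih =>
    have hblock : ∀ x ∈ range h, f ((h * n + x) / h) = f n := by
      intro x hx
      have hxh : x < h := mem_range.1 hx
      rw [add_comm, Nat.add_mul_div_left x n (Nat.zero_lt_of_lt hxh), Nat.div_eq_of_lt hxh,
        zero_add]
    rw [Nat.mul_succ, sum_range_add, ih, sum_congr rfl hblock, sum_range_succ, sum_const,
      card_range, smul_add]

theorem Nat.two_mul_add_one_choose_two (i : ℕ) : 2 * (i + 1).choose 2 = i * (i + 1) := by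
  have := Nat.add_one_mul_choose_eq i 1
  rw [Nat.choose_one_right] at this
  linarith

theorem Nat.six_mul_add_one_choose_three (i : ℕ) :
    6 * (i + 1).choose 3 = (i - 1) * i * (i + 1) := by
  rcases i with _ | j
  · rfl
  · have hpascal := Nat.add_one_mul_choose_eq (j + 1) 2
    have hpair := Nat.two_mul_add_one_choose_two j
    rw [Nat.add_sub_cancel]
    nlinarith

noncomputable def triRoot (m : ℕ) : ℕ := ⌊(√(8 * (m : ℝ) + 1) - 1) / 2⌋₊

theorem triRoot_mono : Monotone triRoot := fun _ _ hab =>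
  Nat.floor_mono <| by gcongr

theorem triRoot_choose_two_add {t x : ℕ} (hx : x ≤ t) : triRoot ((t + 1).choose 2 + x) = t := by
  have htri : (2 * ((t + 1).choose 2 : ℝ)) = t * (t + 1) := by
    exact_mod_cast Nat.two_mul_add_one_choose_two t
  have hx' : (x : ℝ) ≤ t := by exact_mod_cast hx
  have hlow : 2 * (t : ℝ) + 1 ≤ √(8 * (((t + 1).choose 2 + x : ℕ) : ℝ) + 1) :=
    Real.le_sqrt_of_sq_le (by push_cast; nlinarith)
  have hhigh : √(8 * (((t + 1).choose 2 + x : ℕ) : ℝ) + 1) < 2 * t + 3 :=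
    (Real.sqrt_lt' (by positivity)).2 (by push_cast; nlinarith)
  rw [triRoot, Nat.floor_eq_iff (by linarith)]
  constructor <;> linarith

theorem sum_range_choose_two_triRoot (i : ℕ) :
    ∑ q ∈ range ((i + 1).choose 2), triRoot q = 2 * (i + 1).choose 3 := by
  induction i with
  | zero => rfl
  | succ i ih =>
    have hrow : ∀ x ∈ range (i + 1), triRoot ((i + 1).choose 2 + x) = i :=
      fun x hx => triRoot_choose_two_add (Nat.lt_succ_iff.1 (mem_range.1 hx))
    have hrow_len : (i + 2).choose 2 = (i + 1).choose 2 + (i + 1) := by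
      rw [Nat.choose_succ_succ', Nat.choose_one_right, add_comm]
    rw [hrow_len, sum_range_add, ih, sum_congr rfl hrow, sum_const, card_range, smul_eq_mul,
      Nat.choose_succ_succ' (i + 1) 2]
    linarith [Nat.two_mul_add_one_choose_two i]

theorem stmt10_general (p : ℕ) [Fact p.Prime] (h M : ℕ)
    (A : Matrix (Fin (h * M)) (Fin (h * M)) ℚ_[p])
    (hA : ∀ i j : Fin (h * M), ‖A i j‖ ≤
      (p : ℝ) ^ (-((⌊(Real.sqrt (8 * (((i : ℕ) / h : ℕ) : ℝ) + 1) - 1) / 2⌋₊ : ℕ) : ℤ)))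
    (i : ℕ) :
    ‖(Matrix.det ((1 : Matrix (Fin (h * M)) (Fin (h * M)) (Polynomial ℚ_[p])) -
          (Polynomial.X : Polynomial ℚ_[p]) •
            A.map (Polynomial.C : ℚ_[p] →+* Polynomial ℚ_[p]))).coeff
        (i * (i + 1) * h / 2)‖ ≤
      (p : ℝ) ^ (-(((i - 1) * i * (i + 1) * h / 3 : ℕ) : ℤ)) := by
  have hdeg : i * (i + 1) * h / 2 = h * (i + 1).choose 2 := by
    rw [← Nat.two_mul_add_one_choose_two,
      show 2 * (i + 1).choose 2 * h = 2 * (h * (i + 1).choose 2) by ring,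
      Nat.mul_div_cancel_left _ two_pos]
  have hval : (i - 1) * i * (i + 1) * h / 3 =
      ∑ r ∈ range (h * (i + 1).choose 2), triRoot (r / h) := by
    rw [sum_range_mul_div, sum_range_choose_two_triRoot, smul_eq_mul,
      ← Nat.six_mul_add_one_choose_three,
      show 6 * (i + 1).choose 3 * h = 3 * (h * (2 * (i + 1).choose 3)) by ring,
      Nat.mul_div_cancel_left _ three_pos]
  have hpow : ∀ n : ℕ, (p : ℝ) ^ (-(n : ℤ)) = (p : ℝ)⁻¹ ^ n := fun n => by
    rw [zpow_neg, zpow_natCast, inv_pow]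
  have hmono : Monotone fun r => triRoot (r / h) :=
    triRoot_mono.comp fun _ _ hr => Nat.div_le_div_right hr
  refine Matrix.norm_coeff_charpolyRev_le A (w := fun r => (p : ℝ)⁻¹ ^ triRoot (r / h))
    (fun r c => (hpow _).symm ▸ hA r c) _ (by positivity) fun s hs => ?_
  rw [hpow, prod_pow_eq_pow_sum, hval]
  refine pow_le_pow_of_le_one (by positivity)
    (inv_le_one_of_one_le₀ (by exact_mod_cast (Fact.out : p.Prime).one_le)) ?_
  calc ∑ r ∈ range (h * (i + 1).choose 2), triRoot (r / h)
      ≤ ∑ r ∈ s.map Fin.valEmbedding, triRoot (r / h) := by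
        simpa [hs, hdeg] using hmono.sum_range_card_le_sum (s.map Fin.valEmbedding)
    _ = ∑ r ∈ s, triRoot (r / h) := sum_map _ _ _

/-- Let `p` be prime and `h, M ≥ 1`. With `b(m) = ⌊(√(8m+1) − 1)/2⌋`, let `A` be an
`(hM)×(hM)` matrix over `ℚ_p` (rows and columns indexed by `{0,…,hM−1}`) with
`‖A_{ij}‖_p ≤ p^{−b(⌊i/h⌋)}` for all `i, j`. Then for every integer `i ≥ 1` with
`i(i+1)h/2 ≤ hM`, the coefficient of `T^{i(i+1)h/2}` in `det(1 − T·A)` has p-adic norm at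
most `p^{−(i−1)i(i+1)h/3}`. -/
theorem stmt10 (p : ℕ) [Fact p.Prime] (h M : ℕ) (hh : 1 ≤ h) (hM : 1 ≤ M)
    (A : Matrix (Fin (h * M)) (Fin (h * M)) ℚ_[p])
    (hA : ∀ i j : Fin (h * M), ‖A i j‖ ≤
      (p : ℝ) ^ (-((⌊(Real.sqrt (8 * (((i : ℕ) / h : ℕ) : ℝ) + 1) - 1) / 2⌋₊ : ℕ) : ℤ)))
    (i : ℕ) (hi : 1 ≤ i) (hiM : i * (i + 1) * h / 2 ≤ h * M) :
    ‖(Matrix.det ((1 : Matrix (Fin (h * M)) (Fin (h * M)) (Polynomial ℚ_[p])) -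
          (Polynomial.X : Polynomial ℚ_[p]) •
            A.map (Polynomial.C : ℚ_[p] →+* Polynomial ℚ_[p]))).coeff
        (i * (i + 1) * h / 2)‖ ≤
      (p : ℝ) ^ (-(((i - 1) * i * (i + 1) * h / 3 : ℕ) : ℤ)) :=
  stmt10_general p h M A hA i
end

section
/- Let p be a prime and let g ≥ 1, h ≥ 1, N ≥ 1 be integers. Let S = { x ∈ ℤ_{≥0}^g : x_1 + ⋯ + x_g < N }, a finite set. Let A be a square matrix with entries in ℚ_p whose rows and columns are indexed by S × {1,…,h}, such that ‖A_{(x,u),(y,w)}‖_p ≤ p^{−(x_1 + ⋯ + x_g)} for all indices (x,u), (y,w). Let σ_1 ≤ σ_2 ≤ ⋯ ≤ σ_{|S|·h} be the nondecreasing enumeration of the multiset in which, for each integer 0 ≤ i < N, the value i occurs with multiplicity h·binom(i+g−1, g−1). Then for every 0 ≤ n ≤ |S|·h, the coefficient of T^n in det(1 − T·A) ∈ ℚ_p[T] has p-adic norm at most p^{−(σ_1 + σ_2 + ⋯ + σ_n)}. -/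
-- Auxiliary: a strictly monotone map `Fin n → Fin m` satisfies `k ≤ f k` on values.
lemma auxStrictLe {n m : ℕ} (f : Fin n → Fin m) (hf : StrictMono f) (k : Fin n) :
    (k : ℕ) ≤ (f k : ℕ) := by
  obtain ⟨k, hk⟩ := k
  induction k with
  | zero => exact Nat.zero_le _
  | succ j ih =>
    have hj : j < n := Nat.lt_of_succ_lt hk
    have h1 : f ⟨j, hj⟩ < f ⟨j + 1, hk⟩ := hf (by simp [Fin.lt_def])
    have h2 := ih hj
    rw [Fin.lt_def] at h1
    simp only [Fin.val_mk] at h1 h2 ⊢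
    omega

-- Auxiliary: for monotone `σ`, the sum of `σ` over the first `n` indices is minimal among
-- sums over `n`-element subsets.
lemma auxMin {m n : ℕ} (σ : Fin m → ℕ) (hmono : Monotone σ) (hn : n ≤ m)
    (u : Finset (Fin m)) (hu : u.card = n) :
    ∑ k ∈ Finset.univ.filter (fun k : Fin m => (k : ℕ) < n), σ k ≤ ∑ k ∈ u, σ k := by
  have hinj : Function.Injective (u.orderEmbOfFin hu) := (u.orderEmbOfFin hu).injective
  have himg : Finset.image (u.orderEmbOfFin hu) Finset.univ = u := by
    apply Finset.eq_of_subset_of_card_le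
    · intro x hx
      simp only [Finset.mem_image] at hx
      obtain ⟨j, -, rfl⟩ := hx
      exact Finset.orderEmbOfFin_mem u hu j
    · rw [Finset.card_image_of_injective _ hinj, Finset.card_univ, Fintype.card_fin, hu]
  have hflt : (Finset.univ.filter (fun k : Fin m => (k : ℕ) < n)) =
      Finset.image (Fin.castLE hn) Finset.univ := by
    ext k
    simp only [Finset.mem_filter, Finset.mem_univ, true_and, Finset.mem_image]
    constructor
    · intro hk
      exact ⟨⟨(k : ℕ), hk⟩, by ext; simp⟩
    · rintro ⟨j, rfl⟩
      exact j.2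
  rw [hflt, Finset.sum_image (fun x _ y _ h => Fin.castLE_injective hn h),
    ← himg, Finset.sum_image (fun x _ y _ h => hinj h)]
  apply Finset.sum_le_sum
  intro j _
  exact hmono (by
    rw [Fin.le_def]
    simpa using auxStrictLe _ (u.orderEmbOfFin hu).strictMono j)

-- Auxiliary: stars-and-bars count of the fibers of the weight function.
lemma auxCardFiber (g h N : ℕ) (hg : 1 ≤ g)
    [Fintype {x : Fin g → ℕ // ∑ i, x i < N}] (i : ℕ) :
    Fintype.card {j : {x : Fin g → ℕ // ∑ i, x i < N} × Fin h // (∑ k, j.1.1 k) = i} =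
      if i < N then h * (i + g - 1).choose (g - 1) else 0 := by
  classical
  have e1 : {j : {x : Fin g → ℕ // ∑ i, x i < N} × Fin h // (∑ k, j.1.1 k) = i} ≃
      {x : {x : Fin g → ℕ // ∑ i, x i < N} // (∑ k, x.1 k) = i} × Fin h :=
    Equiv.prodSubtypeFstEquivSubtypeProd
      (p := fun x : {x : Fin g → ℕ // ∑ i, x i < N} => (∑ k, x.1 k) = i)
  rw [Fintype.card_congr e1, Fintype.card_prod, Fintype.card_fin]
  by_cases hiN : i < N
  · have e2 : {x : {x : Fin g → ℕ // ∑ i, x i < N} // (∑ k, x.1 k) = i} ≃ Sym (Fin g) i :=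
      (Equiv.subtypeSubtypeEquivSubtypeInter _ _).trans
        ((Equiv.subtypeEquivRight (fun x => ⟨fun hx => hx.2, fun hx => ⟨hx ▸ hiN, hx⟩⟩)).trans
          (Sym.equivNatSumOfFintype (Fin g) i).symm)
    rw [Fintype.card_congr e2, Sym.card_sym_eq_choose, Fintype.card_fin, if_pos hiN]
    have e3 : g + i - 1 = i + (g - 1) := by omega
    have e4 : i + g - 1 = i + (g - 1) := by omega
    rw [e3, e4, mul_comm]
    congr 1
    have := Nat.choose_symm (show g - 1 ≤ i + (g - 1) by omega)
    rw [show i + (g - 1) - (g - 1) = i by omega] at this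
    exact this
  · rw [if_neg hiN]
    have : IsEmpty {x : {x : Fin g → ℕ // ∑ i, x i < N} // (∑ k, x.1 k) = i} :=
      ⟨fun x => hiN (x.2 ▸ x.1.2)⟩
    rw [Fintype.card_eq_zero, zero_mul]

-- Auxiliary: coefficients of the entries of `1 - X • A.map C`.
open Polynomial in
lemma auxEntryCoeff (p : ℕ) [Fact p.Prime] {ι : Type*} [Fintype ι] [DecidableEq ι]
    (A : Matrix ι ι ℚ_[p]) (j i : ι) (d : ℕ) :
    ((1 - (X : Polynomial ℚ_[p]) • A.map (C : ℚ_[p] →+* Polynomial ℚ_[p])) j i).coeff d =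
      (if d = 0 then (if j = i then 1 else 0) else 0) - (if d = 1 then A j i else 0) := by
  simp only [Matrix.sub_apply, Matrix.smul_apply, Matrix.map_apply, Polynomial.coeff_sub,
    Matrix.one_apply, smul_eq_mul]
  congr 1
  · split_ifs <;> simp_all [Polynomial.coeff_one]
  · rw [mul_comm X, Polynomial.coeff_C_mul, Polynomial.coeff_X]
    split_ifs <;> simp_all

-- Auxiliary: norm bound for the coefficients of the entries of `1 - X • A.map C`.
open Polynomial in
lemma auxEntryNorm (p : ℕ) [Fact p.Prime] {ι : Type*} [Fintype ι] [DecidableEq ι]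
    (A : Matrix ι ι ℚ_[p]) (j i : ι) (d : ℕ) :
    ‖((1 - (X : Polynomial ℚ_[p]) • A.map (C : ℚ_[p] →+* Polynomial ℚ_[p])) j i).coeff d‖ ≤
      if d = 0 then 1 else ‖A j i‖ := by
  rw [auxEntryCoeff]
  split_ifs <;> simp_all

set_option maxHeartbeats 1000000 in
/-- Let `p` be prime, `g, h, N ≥ 1`, and `S = {x ∈ ℤ_{≥0}^g : x_1 + ⋯ + x_g < N}` (a finite
set). Let `A` be a square matrix over `ℚ_p` with rows and columns indexed by `S × {1,…,h}`,
satisfying `‖A_{(x,u),(y,w)}‖_p ≤ p^{−(x_1+⋯+x_g)}`. Let `σ` be the nondecreasing enumeration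
of the multiset in which each `0 ≤ i < N` occurs with multiplicity `h·binom(i+g−1, g−1)`.
Then for every `0 ≤ n ≤ |S|·h`, the coefficient of `T^n` in `det(1 − T·A)` has p-adic norm
at most `p^{−(σ_1 + ⋯ + σ_n)}`. -/
theorem stmt11 (p : ℕ) [Fact p.Prime] (g h N : ℕ) (hg : 1 ≤ g) (hh : 1 ≤ h) (hN : 1 ≤ N)
    [Fintype {x : Fin g → ℕ // ∑ i, x i < N}]
    (A : Matrix ({x : Fin g → ℕ // ∑ i, x i < N} × Fin h)
      ({x : Fin g → ℕ // ∑ i, x i < N} × Fin h) ℚ_[p])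
    (hA : ∀ xu yw, ‖A xu yw‖ ≤ (p : ℝ) ^ (-((∑ i, xu.1.1 i : ℕ) : ℤ)))
    (σ : Fin (Fintype.card {x : Fin g → ℕ // ∑ i, x i < N} * h) → ℕ)
    (hmono : Monotone σ)
    (hcount : ∀ i : ℕ, (Finset.univ.filter fun k => σ k = i).card =
      if i < N then h * (i + g - 1).choose (g - 1) else 0)
    (n : ℕ) (hn : n ≤ Fintype.card {x : Fin g → ℕ // ∑ i, x i < N} * h) :
    ‖(Matrix.det (1 - (Polynomial.X : Polynomial ℚ_[p]) •
          A.map (Polynomial.C : ℚ_[p] →+* Polynomial ℚ_[p]))).coeff n‖ ≤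
      (p : ℝ) ^ (-((∑ k ∈ Finset.univ.filter fun k : Fin _ => (k : ℕ) < n, σ k : ℕ) : ℤ)) := by
  classical
  -- fiber count comparison
  have hfib : ∀ i : ℕ,
      Fintype.card {j : {x : Fin g → ℕ // ∑ i, x i < N} × Fin h // (∑ k, j.1.1 k) = i} =
      Fintype.card {k : Fin (Fintype.card {x : Fin g → ℕ // ∑ i, x i < N} * h) // σ k = i} := by
    intro i
    rw [auxCardFiber g h N hg i, Fintype.card_subtype, hcount i]
  -- the equivalence matching weights with σ
  obtain ⟨e, he⟩ : ∃ e : ({x : Fin g → ℕ // ∑ i, x i < N} × Fin h) ≃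
      Fin (Fintype.card {x : Fin g → ℕ // ∑ i, x i < N} * h), ∀ j, σ (e j) = ∑ k, j.1.1 k :=
    ⟨(Equiv.sigmaFiberEquiv (fun j : {x : Fin g → ℕ // ∑ i, x i < N} × Fin h =>
        ∑ k, j.1.1 k)).symm.trans
      ((Equiv.sigmaCongrRight (fun i => Fintype.equivOfCardEq (hfib i))).trans
        (Equiv.sigmaFiberEquiv σ)),
     fun j => (Fintype.equivOfCardEq (hfib (∑ k, j.1.1 k)) ⟨j, rfl⟩).2⟩
  -- key combinatorial inequality
  have key : ∀ t : Finset ({x : Fin g → ℕ // ∑ i, x i < N} × Fin h), t.card = n →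
      (∑ k ∈ Finset.univ.filter fun k : Fin (Fintype.card {x : Fin g → ℕ // ∑ i, x i < N} * h) =>
        (k : ℕ) < n, σ k) ≤ ∑ j ∈ t, ∑ k, j.1.1 k := by
    intro t ht
    have h1 : ∑ j ∈ t, ∑ k, j.1.1 k = ∑ k ∈ t.image e, σ k := by
      rw [Finset.sum_image (fun x _ y _ hxy => e.injective hxy)]
      exact Finset.sum_congr rfl fun j _ => (he j).symm
    rw [h1]
    exact auxMin σ hmono hn _ (by rw [Finset.card_image_of_injective _ e.injective, ht])
  -- real estimates setup
  have hp1 : (1 : ℝ) ≤ (p : ℝ) := by exact_mod_cast (Fact.out : p.Prime).one_lt.le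
  have hp0 : (0 : ℝ) < (p : ℝ)⁻¹ := by positivity
  have hBp : ∀ w : ℕ, (p : ℝ) ^ (-(w : ℤ)) = ((p : ℝ)⁻¹) ^ w := fun w => by
    rw [zpow_neg, zpow_natCast, inv_pow]
  rw [hBp]
  -- expand the determinant
  rw [Matrix.det_apply, Polynomial.finset_sum_coeff]
  apply IsUltrametricDist.norm_sum_le_of_forall_le_of_nonneg (by positivity)
  intro τ _
  rw [show ∀ q : Polynomial ℚ_[p], (Equiv.Perm.sign τ • q).coeff n = Equiv.Perm.sign τ • q.coeff n
    from fun q => Polynomial.coeff_smul _ _ _]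
  have hsign : ‖(Equiv.Perm.sign τ : ℤˣ) •
      (∏ i, (1 - (Polynomial.X : Polynomial ℚ_[p]) •
        A.map (Polynomial.C : ℚ_[p] →+* Polynomial ℚ_[p])) (τ i) i).coeff n‖
      = ‖(∏ i, (1 - (Polynomial.X : Polynomial ℚ_[p]) •
        A.map (Polynomial.C : ℚ_[p] →+* Polynomial ℚ_[p])) (τ i) i).coeff n‖ := by
    rcases Int.units_eq_one_or (Equiv.Perm.sign τ) with hs | hs <;> rw [hs]
    · rw [one_smul]
    · rw [Units.smul_def]
      simp
  rw [hsign]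
  -- pass to power series to expand the coefficient of the product
  have hps : (∏ i, (1 - (Polynomial.X : Polynomial ℚ_[p]) •
        A.map (Polynomial.C : ℚ_[p] →+* Polynomial ℚ_[p])) (τ i) i).coeff n
      = PowerSeries.coeff (R := ℚ_[p]) n (∏ i, (((1 - (Polynomial.X : Polynomial ℚ_[p]) •
        A.map (Polynomial.C : ℚ_[p] →+* Polynomial ℚ_[p])) (τ i) i :
          Polynomial ℚ_[p]) : PowerSeries ℚ_[p])) := by
    rw [← Polynomial.coeff_coe]
    congr 1
    simp only [← Polynomial.coeToPowerSeries.ringHom_apply, map_prod]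
  rw [hps, PowerSeries.coeff_prod]
  apply IsUltrametricDist.norm_sum_le_of_forall_le_of_nonneg (by positivity)
  intro l hl
  rw [Finset.mem_finsuppAntidiag] at hl
  have hbound : ∀ i : ({x : Fin g → ℕ // ∑ i, x i < N} × Fin h),
      ‖PowerSeries.coeff (R := ℚ_[p]) (l i) (((1 - (Polynomial.X : Polynomial ℚ_[p]) •
        A.map (Polynomial.C : ℚ_[p] →+* Polynomial ℚ_[p])) (τ i) i :
          Polynomial ℚ_[p]) : PowerSeries ℚ_[p])‖ ≤
        (if l i = 0 then 1 else ((p : ℝ)⁻¹) ^ (∑ k, ((τ i).1.1 k))) := by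
    intro i
    rw [Polynomial.coeff_coe]
    refine le_trans (auxEntryNorm p A (τ i) i (l i)) ?_
    by_cases h0 : l i = 0
    · rw [if_pos h0, if_pos h0]
    · rw [if_neg h0, if_neg h0]
      have hA' := hA (τ i) i
      rwa [hBp] at hA'
  by_cases hl2 : ∀ i, l i ≤ 1
  · -- all exponents are 0 or 1
    set s1 := Finset.univ.filter
      (fun i : ({x : Fin g → ℕ // ∑ i, x i < N} × Fin h) => ¬ l i = 0) with hs1
    have hcard1 : s1.card = n := by
      have h01 : ∑ i ∈ s1, l i = n := by
        rw [hs1, Finset.sum_filter_ne_zero]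
        exact hl.1
      calc s1.card = ∑ i ∈ s1, 1 := by simp
        _ = ∑ i ∈ s1, l i := Finset.sum_congr rfl (fun i hi =>
            (Nat.le_antisymm (Nat.one_le_iff_ne_zero.mpr (Finset.mem_filter.mp hi).2) (hl2 i)))
        _ = n := h01
    calc ‖∏ i, PowerSeries.coeff (R := ℚ_[p]) (l i) (((1 - (Polynomial.X : Polynomial ℚ_[p]) •
            A.map (Polynomial.C : ℚ_[p] →+* Polynomial ℚ_[p])) (τ i) i :
              Polynomial ℚ_[p]) : PowerSeries ℚ_[p])‖
        = ∏ i, ‖PowerSeries.coeff (R := ℚ_[p]) (l i) (((1 - (Polynomial.X : Polynomial ℚ_[p]) •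
            A.map (Polynomial.C : ℚ_[p] →+* Polynomial ℚ_[p])) (τ i) i :
              Polynomial ℚ_[p]) : PowerSeries ℚ_[p])‖ := norm_prod _ _
      _ ≤ ∏ i, (if l i = 0 then 1 else ((p : ℝ)⁻¹) ^ (∑ k, ((τ i).1.1 k))) :=
          Finset.prod_le_prod (fun i _ => norm_nonneg _) (fun i _ => hbound i)
      _ = ∏ i ∈ s1, ((p : ℝ)⁻¹) ^ (∑ k, ((τ i).1.1 k)) := by
          rw [hs1, Finset.prod_filter]
          simp only [ite_not]
      _ = ((p : ℝ)⁻¹) ^ (∑ i ∈ s1, ∑ k, ((τ i).1.1 k)) := Finset.prod_pow_eq_pow_sum _ _ _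
      _ = ((p : ℝ)⁻¹) ^ (∑ j ∈ s1.image τ, ∑ k, (j.1.1 k)) := by
          rw [Finset.sum_image (fun x _ y _ hxy => τ.injective hxy)]
      _ ≤ ((p : ℝ)⁻¹) ^ (∑ k ∈ Finset.univ.filter
            fun k : Fin (Fintype.card {x : Fin g → ℕ // ∑ i, x i < N} * h) =>
              (k : ℕ) < n, σ k) := by
          apply pow_le_pow_of_le_one hp0.le (inv_le_one_of_one_le₀ hp1)
          exact key _ (by rw [Finset.card_image_of_injective _ τ.injective, hcard1])
  · -- some exponent is ≥ 2, the term vanishes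
    push_neg at hl2
    obtain ⟨i0, hi0⟩ := hl2
    have hz : PowerSeries.coeff (R := ℚ_[p]) (l i0) (((1 - (Polynomial.X : Polynomial ℚ_[p]) •
        A.map (Polynomial.C : ℚ_[p] →+* Polynomial ℚ_[p])) (τ i0) i0 :
          Polynomial ℚ_[p]) : PowerSeries ℚ_[p]) = 0 := by
      rw [Polynomial.coeff_coe, auxEntryCoeff,
        if_neg (show ¬ l i0 = 0 from (Nat.lt_trans Nat.zero_lt_one hi0).ne'),
        if_neg (show ¬ l i0 = 1 from hi0.ne'), sub_zero]
    rw [Finset.prod_eq_zero (Finset.mem_univ i0) hz, norm_zero]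
    positivity
end
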